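/- arXiv:2404.07870 — 2 statements merged into one kernel-verified Lean document; each statement's English description precedes it below -/
import Mathlib

section
/- Let A ∈ ℝ^{n×n}, B ∈ ℝ^{n×p}, and K ∈ ℝ^{p×n} be such that the spectral radius of A+BK is strictly less than 1, and let 0 < ε < 1. Then there exist m ∈ ℕ_{>0} and nonnegative reals σ₁,…,σ_m with (σ₁+⋯+σ_m)/m ≥ 1 such that the matrix I − ε·I − Σ_{j=1}^{m} (σ_j/m) · ((A+BK)^j)ᵀ (A+BK)^j is positive semidefinite. -/
/-!
By Gelfand's formula, spectral radius below one forces `‖M ^ k‖ → 0` for `M = A + B K`; in the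
`L²` operator norm this gives `‖M ^ m x‖² ≤ (1 - ε) ‖x‖²` for some `m`, i.e.
`(1 - ε) I - (M ^ m)ᵀ M ^ m ⪰ 0`. Putting the whole weight `σ_m = m` on the last power then
solves the LMI.
-/

open Matrix Finset Filter Topology

theorem spectrum.spectralRadius_lt_one_of_forall_norm_lt_one {A : Type*} [NormedRing A]
    [NormedAlgebra ℂ A] [CompleteSpace A] {a : A} (ha : ∀ z ∈ spectrum ℂ a, ‖z‖ < 1) :
    spectralRadius ℂ a < 1 := by
  rcases (spectrum ℂ a).eq_empty_or_nonempty with h | h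
  · simp [spectralRadius, h]
  · exact_mod_cast spectralRadius_lt_of_forall_lt_of_nonempty h (r := 1)
      fun z hz => by exact_mod_cast ha z hz

theorem tendsto_pow_atTop_nhds_zero_of_spectralRadius_lt_one {A : Type*} [NormedRing A]
    [NormedAlgebra ℂ A] [CompleteSpace A] {a : A} (ha : spectralRadius ℂ a < 1) :
    Tendsto (a ^ ·) atTop (𝓝 0) := by
  obtain ⟨r, hr0, hρr, hr1⟩ := ENNReal.lt_iff_exists_real_btwn.mp ha
  have hr1 : r < 1 := by simpa using hr1
  have hroot : ∀ᶠ k : ℕ in atTop, ‖a ^ k‖ ^ (1 / k : ℝ) < r := by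
    filter_upwards
      [(spectrum.pow_norm_pow_one_div_tendsto_nhds_spectralRadius a).eventually_lt_const hρr]
      with k hk
    exact (ENNReal.ofReal_lt_ofReal_iff_of_nonneg (by positivity)).mp hk
  refine squeeze_zero_norm' ?_ (tendsto_pow_atTop_nhds_zero_of_lt_one hr0 hr1)
  filter_upwards [hroot, eventually_ne_atTop 0] with k hk hk0
  calc ‖a ^ k‖ = (‖a ^ k‖ ^ (1 / k : ℝ)) ^ k := by
        rw [one_div, Real.rpow_inv_natCast_pow (norm_nonneg _) hk0]
    _ ≤ r ^ k := pow_le_pow_left₀ (by positivity) hk.le k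

section L2OpNorm

open scoped Matrix.Norms.L2Operator

variable {ι : Type*} [Fintype ι] [DecidableEq ι]

theorem Matrix.tendsto_pow_atTop_nhds_zero_of_forall_mem_spectrum_norm_lt_one
    {M : Matrix ι ι ℝ} (hM : ∀ z ∈ spectrum ℂ (M.map (algebraMap ℝ ℂ)), ‖z‖ < 1) :
    Tendsto (M ^ ·) atTop (𝓝 0) := by
  have hMc := tendsto_pow_atTop_nhds_zero_of_spectralRadius_lt_one
    (spectrum.spectralRadius_lt_one_of_forall_norm_lt_one hM)
  have hre : Continuous fun N : Matrix ι ι ℂ => N.map Complex.re :=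
    continuous_id.matrix_map Complex.continuous_re
  convert (hre.tendsto 0).comp hMc using 1
  · ext k : 1
    rw [Function.comp_apply, ← RingHom.mapMatrix_apply, ← map_pow, RingHom.mapMatrix_apply,
      Matrix.map_map]
    ext
    simp
  · simp

theorem Matrix.posSemidef_smul_one_sub_transpose_mul_self {N : Matrix ι ι ℝ} {c : ℝ}
    (hN : ‖N‖ ^ 2 ≤ c) : (c • 1 - Nᵀ * N).PosSemidef := by
  have dotProduct_self_eq (y : ι → ℝ) : y ⬝ᵥ y = ‖WithLp.toLp 2 y‖ ^ 2 := by
    rw [← real_inner_self_eq_norm_sq, EuclideanSpace.inner_toLp_toLp, star_trivial]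
  refine .of_dotProduct_mulVec_nonneg ?_ fun x => ?_
  · simp [IsHermitian, conjTranspose_eq_transpose_of_trivial]
  · have hNx : ‖WithLp.toLp 2 (N *ᵥ x)‖ ≤ ‖N‖ * ‖WithLp.toLp 2 x‖ :=
      N.l2_opNorm_mulVec (WithLp.toLp 2 x)
    have hquad : star x ⬝ᵥ ((c • 1 - Nᵀ * N) *ᵥ x) = c * (x ⬝ᵥ x) - (N *ᵥ x) ⬝ᵥ (N *ᵥ x) := by
      rw [star_trivial, sub_mulVec, smul_mulVec, one_mulVec, ← mulVec_mulVec, dotProduct_sub,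
        dotProduct_smul, smul_eq_mul, dotProduct_mulVec, vecMul_transpose]
    rw [hquad, dotProduct_self_eq, dotProduct_self_eq, sub_nonneg]
    calc ‖WithLp.toLp 2 (N *ᵥ x)‖ ^ 2 ≤ (‖N‖ * ‖WithLp.toLp 2 x‖) ^ 2 :=
          pow_le_pow_left₀ (norm_nonneg _) hNx 2
      _ = ‖N‖ ^ 2 * ‖WithLp.toLp 2 x‖ ^ 2 := mul_pow _ _ _
      _ ≤ c * ‖WithLp.toLp 2 x‖ ^ 2 := by gcongr

theorem Matrix.eventually_posSemidef_smul_one_sub_transpose_pow_mul_pow {M : Matrix ι ι ℝ}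
    (hM : ∀ z ∈ spectrum ℂ (M.map (algebraMap ℝ ℂ)), ‖z‖ < 1) {c : ℝ} (hc : 0 < c) :
    ∀ᶠ k in atTop, (c • 1 - (M ^ k)ᵀ * M ^ k).PosSemidef := by
  have hnorm : Tendsto (fun k => ‖M ^ k‖ ^ 2) atTop (𝓝 0) := by
    simpa using (tendsto_pow_atTop_nhds_zero_of_forall_mem_spectrum_norm_lt_one hM).norm.pow 2
  filter_upwards [hnorm.eventually_lt_const hc] with k hk
  exact posSemidef_smul_one_sub_transpose_mul_self hk.le

end L2OpNorm

theorem stmt_2_general {n p : ℕ} (A : Matrix (Fin n) (Fin n) ℝ) (B : Matrix (Fin n) (Fin p) ℝ)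
    (K : Matrix (Fin p) (Fin n) ℝ)
    (hρ : ∀ μ ∈ spectrum ℂ ((A + B * K).map (algebraMap ℝ ℂ)), ‖μ‖ < 1)
    (ε : ℝ) (hε1 : ε < 1) :
    ∃ (m : ℕ), 0 < m ∧ ∃ σ : Fin m → ℝ, (∀ j, 0 ≤ σ j) ∧
      (∑ j, σ j) / (m : ℝ) ≥ 1 ∧
      ((1 : Matrix (Fin n) (Fin n) ℝ) - ε • (1 : Matrix (Fin n) (Fin n) ℝ)
        - ∑ j : Fin m, (σ j / (m : ℝ)) •
            (((A + B * K) ^ ((j : ℕ) + 1))ᵀ * (A + B * K) ^ ((j : ℕ) + 1))).PosSemidef := by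
  set M := A + B * K
  obtain ⟨k, hk⟩ := ((tendsto_add_atTop_nat 1).eventually
    (eventually_posSemidef_smul_one_sub_transpose_pow_mul_pow hρ (sub_pos.2 hε1))).exists
  have hm : (k : ℝ) + 1 ≠ 0 := by positivity
  set σ : Fin (k + 1) → ℝ := Pi.single (Fin.last k) ((k : ℝ) + 1)
  refine ⟨k + 1, k.succ_pos, σ, fun j => ?_, ?_, ?_⟩
  · by_cases hj : j = Fin.last k <;> simp [σ, hj]; positivity
  · simp [σ, sum_pi_single', hm]
  · have hsum : ∑ j : Fin (k + 1), (σ j / ((k + 1 : ℕ) : ℝ)) •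
        ((M ^ ((j : ℕ) + 1))ᵀ * M ^ ((j : ℕ) + 1)) = (M ^ (k + 1))ᵀ * M ^ (k + 1) := by
      simp [σ, Pi.single_apply, ite_div, ite_smul, hm]
    rw [hsum]
    rwa [sub_smul, one_smul] at hk

/-- Feasibility of the LMI for flexible-step MPC: if ρ(A+BK) < 1 and 0 < ε < 1,
then there exist m > 0 and nonnegative weights σ₁,…,σ_m with average ≥ 1 such that
I − εI − Σ_j (σ_j/m) ((A+BK)^j)ᵀ (A+BK)^j ⪰ 0. -/
theorem stmt_2 {n p : ℕ} (A : Matrix (Fin n) (Fin n) ℝ) (B : Matrix (Fin n) (Fin p) ℝ)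
    (K : Matrix (Fin p) (Fin n) ℝ)
    (hρ : ∀ μ ∈ spectrum ℂ ((A + B * K).map (algebraMap ℝ ℂ)), ‖μ‖ < 1)
    (ε : ℝ) (hε0 : 0 < ε) (hε1 : ε < 1) :
    ∃ (m : ℕ), 0 < m ∧ ∃ σ : Fin m → ℝ, (∀ j, 0 ≤ σ j) ∧
      (∑ j, σ j) / (m : ℝ) ≥ 1 ∧
      ((1 : Matrix (Fin n) (Fin n) ℝ) - ε • (1 : Matrix (Fin n) (Fin n) ℝ)
        - ∑ j : Fin m, (σ j / (m : ℝ)) •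
            (((A + B * K) ^ ((j : ℕ) + 1))ᵀ * (A + B * K) ^ ((j : ℕ) + 1))).PosSemidef :=
  stmt_2_general A B K hρ ε hε1
end

section
/- Let m ∈ ℕ_{>0}, q = 0, and suppose V : ℝⁿ → ℝ is a g-dclf of order m for the system x^{k+1} = f(x^k, u^k) with weights σ₁,…,σ_m ≥ 0 satisfying (σ₁+⋯+σ_m)/m ≥ 1 and bounding function α. Then for every x⁰ ∈ ℝⁿ with x⁰ ≠ 0, there exists an index ℓ ∈ {1,…,m} and a feasible control sequence steering x⁰ to states x¹,…,x^m such that V(x^ℓ) − V(x⁰) ≤ −α(x⁰); i.e., the averaged decrease condition implies a pointwise decrease at some step within the window. -/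
open Finset

/-- If V is a g-dclf of order m (case q = 0) for x⁺ = f(x,u) with weights σ of
average ≥ 1 and bounding function α, then from every x⁰ ≠ 0 there is a feasible
control sequence and an index ℓ in the window with V(x^ℓ) − V(x⁰) ≤ −α(x⁰). -/
theorem stmt_13 {n p : ℕ} (m : ℕ) (hm : 0 < m)
    (f : (Fin n → ℝ) → (Fin p → ℝ) → (Fin n → ℝ))
    (X : Set (Fin n → ℝ)) (U : Set (Fin p → ℝ))
    (V α : (Fin n → ℝ) → ℝ)
    (σ : Fin m → ℝ) (hσ : ∀ j, 0 ≤ σ j) (hσavg : (∑ j, σ j) / (m : ℝ) ≥ 1)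
    -- V continuous and positive definite
    (hVcont : Continuous V) (hV0 : V 0 = 0) (hVpos : ∀ x, x ≠ 0 → 0 < V x)
    -- α continuous, positive definite, radially unbounded
    (hαcont : Continuous α) (hα0 : α 0 = 0) (hαpos : ∀ x, x ≠ 0 → 0 < α x)
    (hαrad : ∀ c : ℝ, ∃ R : ℝ, ∀ x : EuclideanSpace ℝ (Fin n), R ≤ ‖x‖ → c ≤ α x)
    -- V dominates α
    (hVα : ∀ x, α x ≤ V x)
    -- average decrease condition: a feasible control achieving the averaged descent
    (hadc : ∀ x₀ : Fin n → ℝ, ∃ (x : Fin (m + 1) → (Fin n → ℝ)) (u : Fin m → (Fin p → ℝ)),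
      x 0 = x₀ ∧
      (∀ j : Fin m, u j ∈ U ∧ x j.succ = f (x j.castSucc) (u j) ∧ x j.succ ∈ X) ∧
      (1 / (m : ℝ)) * ∑ j : Fin m, σ j * V (x j.succ) - V x₀ ≤ -α x₀) :
    ∀ x₀ : Fin n → ℝ, x₀ ≠ 0 →
      ∃ (x : Fin (m + 1) → (Fin n → ℝ)) (u : Fin m → (Fin p → ℝ)),
        x 0 = x₀ ∧
        (∀ j : Fin m, u j ∈ U ∧ x j.succ = f (x j.castSucc) (u j) ∧ x j.succ ∈ X) ∧
        ∃ ℓ : Fin m, V (x ℓ.succ) - V x₀ ≤ -α x₀ := by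
  intro x₀ hx₀
  obtain ⟨x, u, hx0, hfeas, havg⟩ := hadc x₀
  refine ⟨x, u, hx0, hfeas, ?_⟩
  by_contra h
  push_neg at h
  set c : ℝ := V x₀ - α x₀ with hc
  have hmpos : (0 : ℝ) < m := by exact_mod_cast hm
  have hcge : 0 ≤ c := by simp [hc, hVα x₀]
  have hlt : ∀ ℓ : Fin m, c < V (x ℓ.succ) := by
    intro ℓ; have := h ℓ; linarith
  have hσm : (m : ℝ) ≤ ∑ j, σ j := by
    rw [ge_iff_le, le_div_iff₀ hmpos, one_mul] at hσavg; exact hσavg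
  have hex : ∃ j₀ : Fin m, 0 < σ j₀ := by
    by_contra hall
    push_neg at hall
    have : ∑ j, σ j = 0 := Finset.sum_eq_zero fun j _ => le_antisymm (hall j) (hσ j)
    rw [this] at hσm; linarith
  obtain ⟨j₀, hj₀⟩ := hex
  have hsumlt : ∑ j, σ j * c < ∑ j, σ j * V (x j.succ) := by
    apply Finset.sum_lt_sum
    · intro j _
      exact mul_le_mul_of_nonneg_left (le_of_lt (hlt j)) (hσ j)
    · exact ⟨j₀, Finset.mem_univ j₀, by
        exact mul_lt_mul_of_pos_left (hlt j₀) hj₀⟩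
  have h1 : (∑ j, σ j) * c = ∑ j, σ j * c := by rw [Finset.sum_mul]
  have h2 : (m : ℝ) * c ≤ (∑ j, σ j) * c := mul_le_mul_of_nonneg_right hσm hcge
  have h3 : (1 / (m : ℝ)) * ∑ j : Fin m, σ j * V (x j.succ) ≤ c := by linarith
  have h4 : (m : ℝ) * c < ∑ j, σ j * V (x j.succ) := by
    rw [h1] at h2; linarith
  have h5 : c < (1 / (m : ℝ)) * ∑ j : Fin m, σ j * V (x j.succ) := by
    rw [one_div, ← div_eq_inv_mul]
    exact (lt_div_iff₀ hmpos).mpr (by linarith)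
  linarith
end
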